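/- Cross-term Green's function bound: for a ∈ A, b ∈ B in a partition A ⊔ B ⊔ C of the state space, 0 ≤ G_{A∪B}(a,b) ≤ min{ (σ_b/(1−ρ_a))·G_A(a,a), (ψ_a/(1−φ_b))·G_B(b,b) }. -/

import Mathlib

open MeasureTheory ProbabilityTheory
open scoped ENNReal

noncomputable section

/-- First hitting time of a set `A` by a path `p`, valued in `ℝ≥0∞` (`⊤` if never hit). -/
def hitTime {V : Type*} (p : ℕ → V) (A : Set V) : ℝ≥0∞ :=
  ⨅ t ∈ {t : ℕ | p t ∈ A}, (t : ℝ≥0∞)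

/-- First hitting time of `A` strictly after time `T`. -/
def hitAfter {V : Type*} (p : ℕ → V) (A : Set V) (T : ℝ≥0∞) : ℝ≥0∞ :=
  ⨅ t ∈ {t : ℕ | T < (t : ℝ≥0∞) ∧ p t ∈ A}, (t : ℝ≥0∞)

/-- Position at time `t` of the random walk started at `x` with steps `X j`. -/
def walk {Ω : Type*} (X : ℕ → Ω → ℤ × ℤ) (x : ℤ × ℤ) (t : ℕ) (ω : Ω) : ℤ × ℤ :=
  x + ∑ j ∈ Finset.range t, X j ω

/-- Green's function of visits to `y` from `x` before hitting `Eᶜ`. -/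
def green {Ω : Type*} [MeasurableSpace Ω] (P : Measure Ω) (X : ℕ → Ω → ℤ × ℤ)
    (E : Set (ℤ × ℤ)) (x y : ℤ × ℤ) : ℝ≥0∞ :=
  ∑' j : ℕ, P {ω | walk X x j ω = y ∧ (j : ℝ≥0∞) < hitTime (fun t => walk X x t ω) Eᶜ}

/-- `ψ_x(D,C) = P^x(T_D < T_C)`. -/
def excPsi {Ω : Type*} [MeasurableSpace Ω] (P : Measure Ω) (X : ℕ → Ω → ℤ × ℤ)
    (D C : Set (ℤ × ℤ)) (x : ℤ × ℤ) : ℝ≥0∞ :=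
  P {ω | hitTime (fun t => walk X x t ω) D < hitTime (fun t => walk X x t ω) C}

/-- `ρ_x(D,E,C) = P^x(T_D < T_C` and then `T_E < T_C)`: the walk reaches `D` before `C` and
afterwards reaches `E` before `C`. -/
def excRho {Ω : Type*} [MeasurableSpace Ω] (P : Measure Ω) (X : ℕ → Ω → ℤ × ℤ)
    (D E C : Set (ℤ × ℤ)) (x : ℤ × ℤ) : ℝ≥0∞ :=
  P {ω | hitTime (fun t => walk X x t ω) D < hitTime (fun t => walk X x t ω) C ∧
      hitAfter (fun t => walk X x t ω) E (hitTime (fun t => walk X x t ω) D) <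
        hitTime (fun t => walk X x t ω) C}


/-!
The steps are i.i.d., so every quantity in the statement is computed under the product measure
`μ^ℕ` of the coordinate process. That process has the Markov property at fixed times and, `μ`
being symmetric, its law is invariant under running a path backwards; the latter gives
`G(a, b) = G(b, a)`, so only the second bound needs a proof.

Splitting a path from `a` to `b` at its first visit to `b` gives
`G_{A∪B}(a, b) ≤ ψ_a G_{A∪B}(b, b)`. A loop at `b` either stays in `B`, or it splits at its first
return to `b` after entering `A` into an excursion counted by `φ_b` and another loop. For the
time-truncated sums `G_N`, which are finite, this reads `G_N ≤ G_B(b, b) + φ_b G_N`, whence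
`G_{A∪B}(b, b) ≤ G_B(b, b) / (1 - φ_b)`.
-/

theorem ENNReal.le_div_one_sub_of_le_add_mul {x g φ : ℝ≥0∞} (hx : x ≠ ∞) (hφ : φ < 1)
    (h : x ≤ g + φ * x) : x ≤ g / (1 - φ) := by
  rw [ENNReal.le_div_iff_mul_le (Or.inl (tsub_pos_of_lt hφ).ne')
    (Or.inl (ENNReal.sub_ne_top ENNReal.one_ne_top)), ENNReal.mul_sub fun _ _ => hx, mul_one,
    mul_comm]
  exact tsub_le_iff_right.mpr h

namespace RandomWalk

open Set Finset Function

section HittingTimes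

variable {V : Type*} {p : ℕ → V} {S : Set V}

theorem hitTime_le {t : ℕ} (h : p t ∈ S) : hitTime p S ≤ t :=
  iInf₂_le t h

theorem lt_hitTime_iff {j : ℕ} : (j : ℝ≥0∞) < hitTime p S ↔ ∀ t ≤ j, p t ∉ S := by
  refine ⟨fun h t htj hS => (h.trans_le ((hitTime_le hS).trans (by exact_mod_cast htj))).false,
    fun h => ?_⟩
  have hsucc : ((j + 1 : ℕ) : ℝ≥0∞) ≤ hitTime p S :=
    le_iInf₂ fun t (ht : p t ∈ S) => by
      exact_mod_cast Nat.succ_le_of_lt (not_le.mp fun htj => h t htj ht)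
  exact lt_of_lt_of_le (by exact_mod_cast j.lt_succ_self) hsucc

theorem hitTime_eq {r : ℕ} (h : p r ∈ S) (hmin : ∀ s < r, p s ∉ S) : hitTime p S = r :=
  (hitTime_le h).antisymm <| le_iInf₂ fun t (ht : p t ∈ S) => by
    exact_mod_cast not_lt.mp fun htr => hmin t htr ht

theorem hitAfter_le {T : ℝ≥0∞} {t : ℕ} (hT : T < t) (h : p t ∈ S) : hitAfter p S T ≤ t :=
  iInf₂_le t ⟨hT, h⟩

end HittingTimes

section Paths

variable {α : Type*}

def shift (t : ℕ) (c : ℕ → α) : ℕ → α := fun i => c (t + i)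

/-- `walk X x t ω` is `walkPath x (fun i => X i ω) t`. -/
def walkPath [AddCommMonoid α] (x : α) (c : ℕ → α) (t : ℕ) : α :=
  x + ∑ i ∈ range t, c i

section AddCommMonoid

variable [AddCommMonoid α] {x y z : α} {c c' : ℕ → α}

@[simp]
theorem walkPath_zero : walkPath x c 0 = x := by
  simp [walkPath]

theorem walkPath_add (t s : ℕ) :
    walkPath x c (t + s) = walkPath (walkPath x c t) (shift t c) s := by
  simp only [walkPath, shift, sum_range_add, add_assoc]

theorem walkPath_congr {t : ℕ} (h : ∀ i < t, c i = c' i) : walkPath x c t = walkPath x c' t :=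
  congrArg (x + ·) <| sum_congr rfl fun i hi => h i (mem_range.mp hi)

theorem dependsOn_mem_of_walkPath {F : Set (ℕ → α)} (x : α) (t : ℕ)
    (h : ∀ c c', (∀ s ≤ t, walkPath x c s = walkPath x c' s) → c ∈ F → c' ∈ F) :
    DependsOn (· ∈ F) (Set.Iio t) := by
  intro c c' hcc
  have hpath : ∀ s ≤ t, walkPath x c s = walkPath x c' s := fun s hs =>
    walkPath_congr fun i hi => hcc i (mem_Iio.mpr (hi.trans_le hs))
  exact propext ⟨h c c' hpath, h c' c fun s hs => (hpath s hs).symm⟩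

def greenEvent (E : Set α) (x y : α) (j : ℕ) : Set (ℕ → α) :=
  {c | walkPath x c j = y ∧ ∀ s ≤ j, walkPath x c s ∈ E}

def firstVisitEvent (E : Set α) (x y : α) (t : ℕ) : Set (ℕ → α) :=
  {c | walkPath x c t = y ∧ (∀ s < t, walkPath x c s ≠ y) ∧ ∀ s ≤ t, walkPath x c s ∈ E}

/-- The paths counted by `excRho`, sorted by the time `m` of the first return to `y` after the
first visit `r` to `D`. -/
def excursionEvent (E D : Set α) (y : α) (m : ℕ) : Set (ℕ → α) :=
  {c | ∃ r < m, walkPath y c r ∈ D ∧ (∀ s < r, walkPath y c s ∉ D) ∧ walkPath y c m = y ∧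
    (∀ s, r < s → s < m → walkPath y c s ≠ y) ∧ ∀ s ≤ m, walkPath y c s ∈ E}

variable {E D : Set α}

theorem dependsOn_greenEvent (j : ℕ) : DependsOn (· ∈ greenEvent E x y j) (Set.Iio j) :=
  dependsOn_mem_of_walkPath x j fun _ _ h ⟨hy, hE⟩ =>
    ⟨h j le_rfl ▸ hy, fun s hs => h s hs ▸ hE s hs⟩

theorem dependsOn_firstVisitEvent (t : ℕ) :
    DependsOn (· ∈ firstVisitEvent E x y t) (Set.Iio t) :=
  dependsOn_mem_of_walkPath x t fun _ _ h ⟨hy, hfirst, hE⟩ =>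
    ⟨h t le_rfl ▸ hy, fun s hs => h s hs.le ▸ hfirst s hs, fun s hs => h s hs ▸ hE s hs⟩

theorem dependsOn_excursionEvent (m : ℕ) :
    DependsOn (· ∈ excursionEvent E D y m) (Set.Iio m) :=
  dependsOn_mem_of_walkPath y m fun _ _ h ⟨r, hrm, hr, hrfirst, hy, hreturn, hE⟩ =>
    ⟨r, hrm, h r hrm.le ▸ hr, fun s hs => h s (hs.trans hrm).le ▸ hrfirst s hs, h m le_rfl ▸ hy,
      fun s hrs hsm => h s hsm.le ▸ hreturn s hrs hsm, fun s hs => h s hs ▸ hE s hs⟩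

theorem pairwise_disjoint_firstVisitEvent : Pairwise (Disjoint on firstVisitEvent E x y) := by
  refine fun t t' htt' => Set.disjoint_left.mpr fun c ⟨hy, hfirst, _⟩ ⟨hy', hfirst', _⟩ => ?_
  rcases htt'.lt_or_gt with h | h
  exacts [hfirst' t h hy, hfirst t' h hy']

theorem pairwise_disjoint_excursionEvent : Pairwise (Disjoint on excursionEvent E D y) := by
  refine fun m m' hmm' => Set.disjoint_left.mpr fun c ⟨r, hrm, hr, hrfirst, hy, hreturn, _⟩
    ⟨r', hrm', hr', hrfirst', hy', hreturn', _⟩ => ?_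
  obtain rfl : r = r' := le_antisymm (not_lt.mp fun h => hrfirst r' h hr')
    (not_lt.mp fun h => hrfirst' r h hr)
  rcases hmm'.lt_or_gt with h | h
  exacts [hreturn' m hrm h hy, hreturn m' hrm' h hy']

theorem shift_mem_greenEvent {t j : ℕ} (hy : walkPath x c t = y) (htj : t ≤ j)
    (hc : c ∈ greenEvent E x z j) : shift t c ∈ greenEvent E y z (j - t) := by
  have hpath : ∀ s, walkPath y (shift t c) s = walkPath x c (t + s) := by
    simp [walkPath_add, hy]
  exact ⟨by rw [hpath, Nat.add_sub_cancel' htj]; exact hc.1,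
    fun s hs => hpath s ▸ hc.2 _ (by omega)⟩

theorem greenEvent_subset_iUnion_firstVisitEvent (j : ℕ) :
    greenEvent E x y j ⊆
      ⋃ t ∈ range (j + 1), firstVisitEvent E x y t ∩ shift t ⁻¹' greenEvent E y y (j - t) := by
  classical
  intro c hc
  have hvisit : ∃ t, walkPath x c t = y := ⟨j, hc.1⟩
  have htj : Nat.find hvisit ≤ j := Nat.find_min' hvisit hc.1
  refine mem_biUnion (mem_range.mpr (Nat.lt_succ_of_le htj)) ⟨⟨Nat.find_spec hvisit,
    fun s hs => Nat.find_min hvisit hs, fun s hs => hc.2 s (hs.trans htj)⟩, ?_⟩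
  exact shift_mem_greenEvent (Nat.find_spec hvisit) htj hc

/-- A loop at `y` inside `E` either avoids `D`, or splits at the first return to `y` after its
first visit to `D`. -/
theorem greenEvent_subset_union_iUnion_excursionEvent (hyD : y ∉ D) (m : ℕ) :
    greenEvent E y y m ⊆ greenEvent (E \ D) y y m ∪
      ⋃ t ∈ range (m + 1), excursionEvent E D y t ∩ shift t ⁻¹' greenEvent E y y (m - t) := by
  classical
  intro c hc
  by_cases hD : ∃ s ≤ m, walkPath y c s ∈ D
  · obtain ⟨s, hsm, hs⟩ := hD
    have hvisitD : ∃ r, walkPath y c r ∈ D := ⟨s, hs⟩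
    have hrm : Nat.find hvisitD < m := (Nat.find_min' hvisitD hs |>.trans hsm).lt_of_ne
      fun h => hyD (hc.1 ▸ h ▸ Nat.find_spec hvisitD)
    have hreturn : ∃ t, Nat.find hvisitD < t ∧ walkPath y c t = y := ⟨m, hrm, hc.1⟩
    have htm : Nat.find hreturn ≤ m := Nat.find_min' hreturn ⟨hrm, hc.1⟩
    obtain ⟨hrt, hty⟩ := Nat.find_spec hreturn
    refine Or.inr <| mem_biUnion (mem_range.mpr (Nat.lt_succ_of_le htm))
      ⟨⟨Nat.find hvisitD, hrt, Nat.find_spec hvisitD, fun s hs => Nat.find_min hvisitD hs, hty,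
        fun s hrs hst hsy => Nat.find_min hreturn hst ⟨hrs, hsy⟩,
        fun s hs => hc.2 s (hs.trans htm)⟩, shift_mem_greenEvent hty htm hc⟩
  · simp only [not_exists, not_and] at hD
    exact Or.inl ⟨hc.1, fun s hs => ⟨hc.2 s hs, hD s hs⟩⟩

end AddCommMonoid

section AddCommGroup

variable [AddCommGroup α] {x y : α} {E : Set α} {c : ℕ → α}

/-- Runs the first `j` steps backwards; the later steps are only negated, which is harmless
since the events reversed below depend on the first `j` steps alone. -/
def reverseSteps (j : ℕ) (c : ℕ → α) : ℕ → α :=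
  fun i => -c (if i < j then j - 1 - i else i)

theorem reverseSteps_reverseSteps (j : ℕ) (c : ℕ → α) :
    reverseSteps j (reverseSteps j c) = c := by
  funext i
  by_cases hi : i < j
  · simp [reverseSteps, hi, show j - 1 - i < j by omega, show j - 1 - (j - 1 - i) = i by omega]
  · simp [reverseSteps, hi]

theorem walkPath_reverseSteps {j s : ℕ} (hy : walkPath x c j = y) (hs : s ≤ j) :
    walkPath y (reverseSteps j c) s = walkPath x c (j - s) := by
  have hsum : ∑ i ∈ range s, reverseSteps j c i = -∑ i ∈ range s, shift (j - s) c i := by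
    rw [← sum_range_reflect, ← sum_neg_distrib]
    refine sum_congr rfl fun i hi => ?_
    have hi := mem_range.mp hi
    simp only [reverseSteps, shift, if_pos (show s - 1 - i < j by omega),
      show j - 1 - (s - 1 - i) = j - s + i by omega]
  have hsplit := walkPath_add (x := x) (c := c) (j - s) s
  rw [Nat.sub_add_cancel hs, hy] at hsplit
  rw [hsplit]
  simp only [walkPath, add_assoc, hsum, add_neg_cancel, add_zero]

theorem reverseSteps_mem_greenEvent {j : ℕ} (hc : c ∈ greenEvent E x y j) :
    reverseSteps j c ∈ greenEvent E y x j := by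
  refine ⟨?_, fun s hs => ?_⟩
  · rw [walkPath_reverseSteps hc.1 le_rfl, Nat.sub_self, walkPath_zero]
  · rw [walkPath_reverseSteps hc.1 hs]
    exact hc.2 _ (Nat.sub_le j s)

theorem reverseSteps_preimage_greenEvent (E : Set α) (x y : α) (j : ℕ) :
    reverseSteps j ⁻¹' greenEvent E y x j = greenEvent E x y j :=
  Set.ext fun c => ⟨fun hc => reverseSteps_reverseSteps j c ▸ reverseSteps_mem_greenEvent hc,
    reverseSteps_mem_greenEvent⟩

end AddCommGroup

end Paths

section ProductMeasure

variable {α : Type*} [mα : MeasurableSpace α]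

theorem map_eq_infinitePi {Ω ι : Type*} [MeasurableSpace Ω] {P : Measure Ω} {μ : Measure α}
    [IsProbabilityMeasure μ] {X : ι → Ω → α} (hX : ∀ i, Measurable (X i))
    (hind : iIndepFun X P) (hlaw : ∀ i, P.map (X i) = μ) :
    P.map (fun ω i => X i ω) = Measure.infinitePi fun _ => μ := by
  rw [hind.map_fun_eq_infinitePi_map hX]
  simp only [hlaw]

theorem measurable_shift (t : ℕ) : Measurable (shift (α := α) t) :=
  measurable_pi_lambda _ fun i => measurable_pi_apply (t + i)

theorem measurable_domRestrict_iSup_comap (s : Set ℕ) :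
    Measurable[⨆ i ∈ s, mα.comap fun c : ℕ → α => c i] (s.domRestrict (π := fun _ => α)) :=
  (@measurable_pi_iff _ _ _ (⨆ i ∈ s, mα.comap fun c : ℕ → α => c i) _ _).mpr fun i =>
    Measurable.of_comap_le (le_iSup₂ (f := fun j (_ : j ∈ s) => mα.comap fun c : ℕ → α => c j)
      i.1 i.2)

theorem measurable_shift_iSup_comap (t : ℕ) :
    Measurable[⨆ i ∈ Set.Ici t, mα.comap fun c : ℕ → α => c i] (shift (α := α) t) :=
  (@measurable_pi_iff _ _ _ (⨆ i ∈ Set.Ici t, mα.comap fun c : ℕ → α => c i) _ _).mpr fun i =>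
    Measurable.of_comap_le
      (le_iSup₂ (f := fun j (_ : j ∈ Set.Ici t) => mα.comap fun c : ℕ → α => c j)
        (t + i) (Nat.le_add_right t i))

theorem measurableSet_iSup_comap_of_dependsOn [MeasurableSingletonClass α] [Countable α]
    {F : Set (ℕ → α)} {s : Set ℕ} (hs : s.Finite) (hF : DependsOn (· ∈ F) s) :
    MeasurableSet[⨆ i ∈ s, mα.comap fun c : ℕ → α => c i] F := by
  have := hs.to_subtype
  have hpre : F = s.domRestrict ⁻¹' (s.domRestrict '' F) := by
    refine (subset_preimage_image _ _).antisymm ?_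
    rintro c ⟨c', hc', hcc'⟩
    exact cast (hF fun i hi => congrFun hcc' ⟨i, hi⟩) hc'
  rw [hpre]
  exact measurable_domRestrict_iSup_comap s (Set.to_countable _).measurableSet

theorem measurableSet_of_dependsOn [MeasurableSingletonClass α] [Countable α]
    {F : Set (ℕ → α)} {s : Set ℕ} (hs : s.Finite) (hF : DependsOn (· ∈ F) s) :
    MeasurableSet F :=
  iSup₂_le (fun i _ => (measurable_pi_apply i).comap_le) _
    (measurableSet_iSup_comap_of_dependsOn hs hF)

variable (μ : Measure α) [IsProbabilityMeasure μ]

local notation "ν" => Measure.infinitePi fun _ : ℕ => μ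

theorem iIndepFun_eval_infinitePi : iIndepFun (fun i (c : ℕ → α) => c i) ν :=
  iIndepFun_infinitePi (X := fun _ => id) fun _ => measurable_id

theorem infinitePi_map_shift (t : ℕ) : Measure.map (shift t) ν = ν :=
  map_eq_infinitePi (fun i => measurable_pi_apply (t + i))
    ((iIndepFun_eval_infinitePi μ).precomp (add_right_injective t))
    fun i => Measure.infinitePi_map_eval _ (t + i)

variable [MeasurableSingletonClass α] [Countable α]

theorem infinitePi_inter_shift_preimage {F G : Set (ℕ → α)} {t : ℕ}
    (hF : DependsOn (· ∈ F) (Set.Iio t)) (hG : MeasurableSet G) :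
    ν (F ∩ shift t ⁻¹' G) = ν F * ν G := by
  have hindep := indep_iSup_of_disjoint (fun i => (measurable_pi_apply i).comap_le)
    (iIndepFun_eval_infinitePi μ) (Set.Iio_disjoint_Ici (a := t) le_rfl)
  rw [(Indep_iff _ _ _).mp hindep _ _
    (measurableSet_iSup_comap_of_dependsOn (Set.finite_Iio t) hF)
    (measurable_shift_iSup_comap t hG), ← Measure.map_apply (measurable_shift t) hG,
    infinitePi_map_shift]

theorem sum_range_measure_iUnion_shift_le {F G : ℕ → Set (ℕ → α)}
    (hF : ∀ t, DependsOn (· ∈ F t) (Set.Iio t)) (hG : ∀ m, MeasurableSet (G m)) (N : ℕ) :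
    ∑ j ∈ range N, ν (⋃ t ∈ range (j + 1), F t ∩ shift t ⁻¹' G (j - t)) ≤
      (∑' t, ν (F t)) * ∑ m ∈ range N, ν (G m) :=
  calc ∑ j ∈ range N, ν (⋃ t ∈ range (j + 1), F t ∩ shift t ⁻¹' G (j - t))
      ≤ ∑ j ∈ range N, ∑ t ∈ range (j + 1), ν (F t) * ν (G (j - t)) :=
        sum_le_sum fun j _ => (measure_biUnion_finset_le _ _).trans_eq <|
          sum_congr rfl fun t _ => infinitePi_inter_shift_preimage μ (hF t) (hG _)
    _ = ∑ t ∈ range N, ν (F t) * ∑ m ∈ range (N - t), ν (G m) := by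
        simp only [range_eq_Ico]
        rw [← sum_Ico_Ico_comm]
        refine sum_congr rfl fun t _ => ?_
        simp only [sum_Ico_eq_sum_range, mul_sum, Nat.add_sub_cancel_left, Nat.sub_zero,
          zero_add]
    _ ≤ ∑ t ∈ range N, ν (F t) * ∑ m ∈ range N, ν (G m) := by
        gcongr with t
        exact Nat.sub_le N t
    _ ≤ (∑' t, ν (F t)) * ∑ m ∈ range N, ν (G m) := by
        rw [← sum_mul]
        gcongr
        exact ENNReal.sum_le_tsum _

end ProductMeasure

section CoordinateWalk

variable {α : Type*} [MeasurableSpace α] [MeasurableSingletonClass α] [Countable α]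
  (μ : Measure α) [IsProbabilityMeasure μ]

local notation "ν" => Measure.infinitePi fun _ : ℕ => μ

section AddCommMonoid

variable [AddCommMonoid α] {E D : Set α} {x y : α}

theorem tsum_greenEvent_le_mul :
    ∑' j, ν (greenEvent E x y j) ≤
      (∑' t, ν (firstVisitEvent E x y t)) * ∑' m, ν (greenEvent E y y m) := by
  rw [ENNReal.tsum_eq_iSup_nat]
  refine iSup_le fun N => ?_
  calc ∑ j ∈ range N, ν (greenEvent E x y j)
      ≤ ∑ j ∈ range N, ν (⋃ t ∈ range (j + 1),
          firstVisitEvent E x y t ∩ shift t ⁻¹' greenEvent E y y (j - t)) :=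
        sum_le_sum fun j _ => measure_mono (greenEvent_subset_iUnion_firstVisitEvent j)
    _ ≤ (∑' t, ν (firstVisitEvent E x y t)) * ∑ m ∈ range N, ν (greenEvent E y y m) :=
        sum_range_measure_iUnion_shift_le μ dependsOn_firstVisitEvent
          (fun m => measurableSet_of_dependsOn (Set.finite_Iio m) (dependsOn_greenEvent m)) N
    _ ≤ _ := by
        gcongr
        exact ENNReal.sum_le_tsum _

theorem sum_range_greenEvent_le (hyD : y ∉ D) (N : ℕ) :
    ∑ m ∈ range N, ν (greenEvent E y y m) ≤ ∑' m, ν (greenEvent (E \ D) y y m) +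
      (∑' t, ν (excursionEvent E D y t)) * ∑ m ∈ range N, ν (greenEvent E y y m) :=
  calc ∑ m ∈ range N, ν (greenEvent E y y m)
      ≤ ∑ m ∈ range N, (ν (greenEvent (E \ D) y y m) + ν (⋃ t ∈ range (m + 1),
          excursionEvent E D y t ∩ shift t ⁻¹' greenEvent E y y (m - t))) :=
        sum_le_sum fun m _ => (measure_mono
          (greenEvent_subset_union_iUnion_excursionEvent hyD m)).trans (measure_union_le _ _)
    _ ≤ _ := by
        rw [sum_add_distrib]
        exact add_le_add (ENNReal.sum_le_tsum _) (sum_range_measure_iUnion_shift_le μ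
          dependsOn_excursionEvent
          (fun m => measurableSet_of_dependsOn (Set.finite_Iio m) (dependsOn_greenEvent m)) N)

theorem tsum_greenEvent_le_div (hyD : y ∉ D) {φ : ℝ≥0∞}
    (hexc : ∑' t, ν (excursionEvent E D y t) ≤ φ) (hφ : φ < 1) :
    ∑' m, ν (greenEvent E y y m) ≤ (∑' m, ν (greenEvent (E \ D) y y m)) / (1 - φ) := by
  rw [ENNReal.tsum_eq_iSup_nat]
  refine iSup_le fun N => ENNReal.le_div_one_sub_of_le_add_mul
    (ENNReal.sum_ne_top.mpr fun m _ => measure_ne_top _ _) hφ ?_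
  exact (sum_range_greenEvent_le μ hyD N).trans (by gcongr)

end AddCommMonoid

section AddCommGroup

variable [AddCommGroup α]

theorem measurable_reverseSteps (j : ℕ) : Measurable (reverseSteps (α := α) j) :=
  measurable_pi_lambda _ fun _ => (measurable_of_countable _).comp (measurable_pi_apply _)

theorem infinitePi_map_reverseSteps (hμ : μ.map (fun z : α => -z) = μ) (j : ℕ) :
    Measure.map (reverseSteps j) ν = ν := by
  have hinj : Injective fun i : ℕ => if i < j then j - 1 - i else i := by
    intro i i' h
    dsimp only at h
    split_ifs at h <;> omega
  refine map_eq_infinitePi (fun i => (measurable_of_countable _).comp (measurable_pi_apply _))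
    (((iIndepFun_eval_infinitePi μ).precomp hinj).comp (fun _ (z : α) => -z)
      fun _ => measurable_of_countable _) fun i => ?_
  calc Measure.map (fun c => reverseSteps j c i) ν
      = (Measure.map (fun c : ℕ → α => c (if i < j then j - 1 - i else i)) ν).map (-·) :=
        (Measure.map_map (measurable_of_countable _) (measurable_pi_apply _)).symm
    _ = μ := by rw [Measure.infinitePi_map_eval, hμ]

theorem infinitePi_greenEvent_comm (hμ : μ.map (fun z : α => -z) = μ) (E : Set α) (x y : α)
    (j : ℕ) : ν (greenEvent E x y j) = ν (greenEvent E y x j) := by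
  rw [← reverseSteps_preimage_greenEvent, ← Measure.map_apply (measurable_reverseSteps j)
    (measurableSet_of_dependsOn (Set.finite_Iio j) (dependsOn_greenEvent j)),
    infinitePi_map_reverseSteps μ hμ]

end AddCommGroup

end CoordinateWalk

section StepSequence

variable {Ω : Type*} [MeasurableSpace Ω] {P : Measure Ω} {X : ℕ → Ω → ℤ × ℤ}
  {μ : Measure (ℤ × ℤ)} {A B C D E : Set (ℤ × ℤ)} {x y : ℤ × ℤ}

local notation "ν" => Measure.infinitePi fun _ : ℕ => μ

theorem measure_preimage_steps (hX : ∀ j, Measurable (X j))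
    (hν : P.map (fun ω i => X i ω) = ν) {S : Set (ℕ → ℤ × ℤ)} (hS : MeasurableSet S) :
    P ((fun ω i => X i ω) ⁻¹' S) = ν S := by
  rw [← hν, Measure.map_apply (measurable_pi_lambda _ hX) hS]

theorem green_eq_tsum (hX : ∀ j, Measurable (X j)) (hν : P.map (fun ω i => X i ω) = ν)
    (E : Set (ℤ × ℤ)) (x y : ℤ × ℤ) : green P X E x y = ∑' j, ν (greenEvent E x y j) := by
  refine tsum_congr fun j => ?_
  rw [← measure_preimage_steps hX hν
    (measurableSet_of_dependsOn (Set.finite_Iio j) (dependsOn_greenEvent j))]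
  congr 1
  ext ω
  exact and_congr_right' <| lt_hitTime_iff.trans <| forall₂_congr fun _ _ => not_not

theorem green_comm [IsProbabilityMeasure μ] (hX : ∀ j, Measurable (X j))
    (hν : P.map (fun ω i => X i ω) = ν) (hμ : μ.map (fun z => -z) = μ) (E : Set (ℤ × ℤ))
    (x y : ℤ × ℤ) :
    green P X E x y = green P X E y x := by
  simp only [green_eq_tsum hX hν, infinitePi_greenEvent_comm μ hμ E x y]

theorem tsum_le_measure_of_preimage_subset (hX : ∀ j, Measurable (X j))
    (hν : P.map (fun ω i => X i ω) = ν) {F : ℕ → Set (ℕ → ℤ × ℤ)}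
    (hF : ∀ t, MeasurableSet (F t)) (hdisj : Pairwise (Disjoint on F)) {Q : Set Ω}
    (hQ : ∀ t, (fun ω i => X i ω) ⁻¹' F t ⊆ Q) : ∑' t, ν (F t) ≤ P Q := by
  rw [← measure_iUnion hdisj hF, ← measure_preimage_steps hX hν (MeasurableSet.iUnion hF),
    preimage_iUnion]
  exact measure_mono (iUnion_subset hQ)

theorem tsum_firstVisitEvent_le_excPsi (hX : ∀ j, Measurable (X j))
    (hν : P.map (fun ω i => X i ω) = ν) (hEC : Disjoint E C) (hy : y ∈ D) :
    ∑' t, ν (firstVisitEvent E x y t) ≤ excPsi P X D C x :=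
  tsum_le_measure_of_preimage_subset hX hν
    (fun t => measurableSet_of_dependsOn (Set.finite_Iio t) (dependsOn_firstVisitEvent t))
    pairwise_disjoint_firstVisitEvent fun _ _ ⟨hty, _, hE⟩ =>
      (hitTime_le ((congrArg (· ∈ D) hty).mpr hy)).trans_lt
        (lt_hitTime_iff.mpr fun s hs => Set.disjoint_left.mp hEC (hE s hs))

theorem tsum_excursionEvent_le_excRho (hX : ∀ j, Measurable (X j))
    (hν : P.map (fun ω i => X i ω) = ν) (hEC : Disjoint E C) (hy : y ∈ B) :
    ∑' t, ν (excursionEvent E D y t) ≤ excRho P X D B C y :=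
  tsum_le_measure_of_preimage_subset hX hν
    (fun t => measurableSet_of_dependsOn (Set.finite_Iio t) (dependsOn_excursionEvent t))
    pairwise_disjoint_excursionEvent fun m ω ⟨r, hrm, hr, hrfirst, hmy, _, hE⟩ => by
      have hTC : (m : ℝ≥0∞) < hitTime (fun s => walk X y s ω) C :=
        lt_hitTime_iff.mpr fun s hs => Set.disjoint_left.mp hEC (hE s hs)
      have hTD : hitTime (fun s => walk X y s ω) D = r := hitTime_eq hr hrfirst
      have hrm' : (r : ℝ≥0∞) < m := by exact_mod_cast hrm
      have hTB : hitAfter (fun s => walk X y s ω) B r ≤ m :=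
        hitAfter_le hrm' ((congrArg (· ∈ B) hmy).mpr hy)
      exact ⟨hTD ▸ hrm'.trans hTC, hTD ▸ hTB.trans_lt hTC⟩

theorem green_union_le [IsProbabilityMeasure μ] (hX : ∀ j, Measurable (X j))
    (hν : P.map (fun ω i => X i ω) = ν) (hAB : Disjoint A B) (hABC : Disjoint (A ∪ B) C)
    {a b : ℤ × ℤ} (hb : b ∈ B) (hφ : excRho P X A B C b < 1) :
    green P X (A ∪ B) a b ≤ (excPsi P X B C a / (1 - excRho P X A B C b)) * green P X B b b := by
  have hbA : b ∉ A := Set.disjoint_right.mp hAB hb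
  rw [green_eq_tsum hX hν, green_eq_tsum hX hν]
  calc ∑' j, ν (greenEvent (A ∪ B) a b j)
      ≤ (∑' t, ν (firstVisitEvent (A ∪ B) a b t)) * ∑' m, ν (greenEvent (A ∪ B) b b m) :=
        tsum_greenEvent_le_mul μ
    _ ≤ excPsi P X B C a *
          ((∑' m, ν (greenEvent ((A ∪ B) \ A) b b m)) / (1 - excRho P X A B C b)) :=
        mul_le_mul' (tsum_firstVisitEvent_le_excPsi hX hν hABC hb)
          (tsum_greenEvent_le_div μ hbA (tsum_excursionEvent_le_excRho hX hν hABC hb) hφ)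
    _ = _ := by
        rw [Set.union_sdiff_left, hAB.symm.sdiff_eq_left]
        simp only [div_eq_mul_inv]
        ring

end StepSequence

end RandomWalk

open RandomWalk

theorem green_cross_term_bound_general {Ω : Type*} [MeasurableSpace Ω] (P : Measure Ω)
    (X : ℕ → Ω → ℤ × ℤ) (hX : ∀ j, Measurable (X j))
    (μ : Measure (ℤ × ℤ)) [IsProbabilityMeasure μ]
    (hind : iIndepFun X P)
    (hlaw : ∀ j, Measure.map (X j) P = μ)
    (hsym : Measure.map (fun z : ℤ × ℤ => -z) μ = μ)
    (A B C : Set (ℤ × ℤ))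
    (hAB : Disjoint A B) (hAC : Disjoint A C) (hBC : Disjoint B C)
    (a b : ℤ × ℤ) (ha : a ∈ A) (hb : b ∈ B)
    (hρ : excRho P X B A C a < 1) (hφ : excRho P X A B C b < 1) :
    0 ≤ green P X (A ∪ B) a b ∧
    green P X (A ∪ B) a b ≤
      min ((excPsi P X A C b / (1 - excRho P X B A C a)) * green P X A a a)
        ((excPsi P X B C a / (1 - excRho P X A B C b)) * green P X B b b) := by
  have hν := map_eq_infinitePi hX hind hlaw
  refine ⟨zero_le, le_min ?_ ?_⟩
  · rw [green_comm hX hν hsym, Set.union_comm]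
    exact green_union_le hX hν hAB.symm (Set.disjoint_union_left.mpr ⟨hBC, hAC⟩) ha hρ
  · exact green_union_le hX hν hAB (Set.disjoint_union_left.mpr ⟨hAC, hBC⟩) hb hφ

/-- Cross-term Green's function bound: for a symmetric recurrent walk and a partition
`A ⊔ B ⊔ C` of `ℤ²`, for `a ∈ A`, `b ∈ B` with `ρ_a < 1`, `φ_b < 1`:
`0 ≤ G_{A∪B}(a,b) ≤ min{ (σ_b/(1−ρ_a))·G_A(a,a), (ψ_a/(1−φ_b))·G_B(b,b) }`. -/
theorem green_cross_term_bound {Ω : Type*} [MeasurableSpace Ω] (P : Measure Ω)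
    [IsProbabilityMeasure P] (X : ℕ → Ω → ℤ × ℤ) (hX : ∀ j, Measurable (X j))
    (μ : Measure (ℤ × ℤ)) [IsProbabilityMeasure μ]
    (hind : iIndepFun X P)
    (hlaw : ∀ j, Measure.map (X j) P = μ)
    (hsym : Measure.map (fun z : ℤ × ℤ => -z) μ = μ)
    (hrec : ∀ x y : ℤ × ℤ, ∀ᵐ ω ∂P, ∃ t : ℕ, walk X x t ω = y)
    (A B C : Set (ℤ × ℤ)) (hcover : A ∪ B ∪ C = Set.univ)
    (hAB : Disjoint A B) (hAC : Disjoint A C) (hBC : Disjoint B C)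
    (a b : ℤ × ℤ) (ha : a ∈ A) (hb : b ∈ B)
    (hρ : excRho P X B A C a < 1) (hφ : excRho P X A B C b < 1) :
    0 ≤ green P X (A ∪ B) a b ∧
    green P X (A ∪ B) a b ≤
      min ((excPsi P X A C b / (1 - excRho P X B A C a)) * green P X A a a)
        ((excPsi P X B C a / (1 - excRho P X A B C b)) * green P X B b b) :=
  green_cross_term_bound_general P X hX μ hind hlaw hsym A B C hAB hAC hBC a b ha hb hρ hφ

end
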